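/- Let k be an algebraically closed field of characteristic 2, G = Z/4Z acting faithfully on a curve X over k fixing a point x, with X/G of genus 0 and the action on X \ {x} unramified (an HKG Z/4Z-curve). Then X has genus 1 if and only if the lower ramification groups at x satisfy |G_0| = |G_1| = 4, |G_2| = |G_3| = 2, and G_i = 1 for i ≥ 4. -/

import Mathlib

open PowerSeries

/-!
Every element of `G` acts on `k⟦X⟧` through `X ↦ u X + O(X²)`, and `g ↦ u` is multiplicative;
since `G` is a `2`-group and `k` has characteristic `2`, `u = 1`, so `G = G₀ = G₁`. Each `Gᵢ`
is a subgroup of `G`, so `|Gᵢ| ∈ {1, 2, 4}`, decreasing in `i`. With `|G₀| = |G₁| = 4` the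
Hurwitz formula gives `g_X = 1` exactly when `∑_{i ≥ 2} (|Gᵢ| - 1) = 2`, and the only
decreasing sequence in `{1, 2, 4}` with this tail sum is `2, 2, 1, 1, …`.
-/

theorem Finset.sum_range_le_of_forall_ge_eq_zero {M : Type*} [AddCommMonoid M] [PartialOrder M]
    [IsOrderedAddMonoid M] {f : ℕ → M} {N : ℕ} (hf : ∀ i, 0 ≤ f i) (hN : ∀ i ≥ N, f i = 0)
    (n : ℕ) : ∑ i ∈ range n, f i ≤ ∑ i ∈ range N, f i :=
  calc ∑ i ∈ range n, f i
      ≤ ∑ i ∈ range (max n N), f i :=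
        sum_le_sum_of_subset_of_nonneg (range_mono (le_max_left n N)) fun i _ _ => hf i
    _ = ∑ i ∈ range N, f i := eventually_constant_sum hN (le_max_right n N)

theorem Finset.sum_range_eq_of_forall_ge_eq_zero {M : Type*} [AddCommMonoid M] {f : ℕ → M}
    {m n : ℕ} (hm : ∀ i ≥ m, f i = 0) (hn : ∀ i ≥ n, f i = 0) :
    ∑ i ∈ range m, f i = ∑ i ∈ range n, f i := by
  rw [← eventually_constant_sum hm (le_max_left m n), eventually_constant_sum hn (le_max_right m n)]

theorem sum_range_sub_one_eq_eight_iff {c : ℕ → ℕ} {N : ℕ} (hc : Antitone c)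
    (hdvd : ∀ i, c i ∣ 4) (hc0 : c 0 = 4) (hc1 : c 1 = 4) (hN : ∀ i ≥ N, c i = 1) :
    ∑ i ∈ Finset.range N, ((c i : ℤ) - 1) = 8 ↔ c 2 = 2 ∧ c 3 = 2 ∧ ∀ i ≥ 4, c i = 1 := by
  have hval : ∀ i, c i = 1 ∨ c i = 2 ∨ c i = 4 := fun i => by
    have hi := hdvd i
    have := Nat.le_of_dvd (by norm_num) hi
    interval_cases c i <;> omega
  have hstable : ∀ m, c m = 1 → ∀ i ≥ m, c i = 1 := fun m hm i hi => by
    have := hc hi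
    have := hval i
    omega
  have hsum_eq : ∀ m, c m = 1 →
      ∑ i ∈ Finset.range N, ((c i : ℤ) - 1) = ∑ i ∈ Finset.range m, ((c i : ℤ) - 1) :=
    fun m hm => Finset.sum_range_eq_of_forall_ge_eq_zero (by simp_all)
      (fun i hi => by simp [hstable m hm i hi])
  constructor
  · intro h8
    have h5 := Finset.sum_range_le_of_forall_ge_eq_zero (f := fun i => (c i : ℤ) - 1) (N := N)
      (fun i => by have := hval i; omega) (fun i hi => by simp [hN i hi]) 5
    simp only [Finset.sum_range_succ, Finset.sum_range_zero, hc0, hc1, h8] at h5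
    have hc2 : c 2 = 2 := by
      have : c 2 ≠ 1 := fun h => by
        have := hsum_eq 2 h
        norm_num [h8, Finset.sum_range_succ, hc0, hc1] at this
      have := hc (show 2 ≤ 3 by norm_num)
      have := hc (show 3 ≤ 4 by norm_num)
      have := hval 2; have := hval 3; have := hval 4
      omega
    have hc3 : c 3 = 2 := by
      have : c 3 ≠ 1 := fun h => by
        have := hsum_eq 3 h
        norm_num [h8, Finset.sum_range_succ, hc0, hc1, hc2] at this
      have := hc (show 2 ≤ 3 by norm_num)
      have := hval 3
      omega
    exact ⟨hc2, hc3, hstable 4 (by have := hval 4; omega)⟩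
  · rintro ⟨hc2, hc3, hc4⟩
    rw [hsum_eq 4 (hc4 4 le_rfl)]
    simp [Finset.sum_range_succ, hc0, hc1, hc2, hc3]

namespace PowerSeries

variable {k : Type*} [Field k]

theorem X_dvd_algEquiv_X (g : k⟦X⟧ ≃ₐ[k] k⟦X⟧) : X ∣ g X := by
  rw [X_dvd_iff]
  by_contra h
  have := isUnit_iff_constantCoeff.2 (isUnit_iff_ne_zero.2 h)
  rw [isUnit_map_iff, isUnit_iff_constantCoeff, constantCoeff_X] at this
  exact not_isUnit_zero this

/-- Writing `f = X f₁ + c`, one has `g f - f = (g X - X) g f₁ + X (g f₁ - f₁)`, and induction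
on the order of vanishing does the rest. -/
theorem X_pow_dvd_algEquiv_sub {g : k⟦X⟧ ≃ₐ[k] k⟦X⟧} {m : ℕ} (hg : X ^ m ∣ g X - X)
    (f : k⟦X⟧) : X ^ m ∣ g f - f := by
  suffices ∀ j ≤ m, ∀ f : k⟦X⟧, X ^ j ∣ g f - f from this m le_rfl f
  intro j
  induction j with
  | zero => simp
  | succ j ih =>
    intro hj f
    set f₁ : k⟦X⟧ := mk fun p => coeff (p + 1) f
    have hsplit : g f - f = (g X - X) * g f₁ + X * (g f₁ - f₁) := by
      conv_lhs => rw [eq_X_mul_shift_add_const f]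
      rw [map_add, map_mul, C_eq_algebraMap, AlgEquiv.commutes]
      ring
    rw [hsplit]
    refine dvd_add (dvd_mul_of_dvd_left ((pow_dvd_pow X hj).trans hg) _) ?_
    rw [pow_succ']
    exact mul_dvd_mul_left X (ih (Nat.le_of_succ_le hj) f₁)

theorem constantCoeff_algEquiv (g : k⟦X⟧ ≃ₐ[k] k⟦X⟧) (f : k⟦X⟧) :
    constantCoeff (g f) = constantCoeff f := by
  have hX : X ^ 1 ∣ g X - X := by
    rw [pow_one]
    exact dvd_sub (X_dvd_algEquiv_X g) dvd_rfl
  have := X_pow_dvd_algEquiv_sub hX f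
  rwa [pow_one, X_dvd_iff, map_sub, sub_eq_zero] at this

/-- The action of an automorphism on the cotangent space `(X) / (X²)`. -/
noncomputable def linearCoeffHom : (k⟦X⟧ ≃ₐ[k] k⟦X⟧) →* k where
  toFun g := coeff 1 (g X)
  map_one' := coeff_one_X
  map_mul' g h := by
    obtain ⟨e, he⟩ := X_dvd_algEquiv_X g
    obtain ⟨f, hf⟩ := X_dvd_algEquiv_X h
    simp only [AlgEquiv.mul_apply, hf, he, map_mul, mul_assoc, coeff_succ_X_mul,
      coeff_zero_eq_constantCoeff_apply, constantCoeff_algEquiv]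

variable (k) in
def lowerRamificationGroup (i : ℕ) : Subgroup (k⟦X⟧ ≃ₐ[k] k⟦X⟧) where
  carrier := {g | ∀ f, X ^ (i + 1) ∣ g f - f}
  one_mem' f := by simp
  mul_mem' {a b} ha hb f := by
    rw [AlgEquiv.mul_apply, ← sub_add_sub_cancel _ (b f)]
    exact dvd_add (ha (b f)) (hb f)
  inv_mem' {a} ha f := by
    have := ha (a⁻¹ f)
    rwa [← AlgEquiv.mul_apply, mul_inv_cancel, AlgEquiv.one_apply, ← dvd_neg, neg_sub] at this

theorem mem_lowerRamificationGroup {i : ℕ} {g : k⟦X⟧ ≃ₐ[k] k⟦X⟧} :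
    g ∈ lowerRamificationGroup k i ↔ ∀ f, X ^ (i + 1) ∣ g f - f :=
  Iff.rfl

theorem lowerRamificationGroup_antitone : Antitone (lowerRamificationGroup k) :=
  fun _ _ hij _ hg f => (pow_dvd_pow X (Nat.succ_le_succ hij)).trans (hg f)

theorem mem_lowerRamificationGroup_one_of_pow_eq_one {p n : ℕ} [ExpChar k p]
    {g : k⟦X⟧ ≃ₐ[k] k⟦X⟧} (hg : g ^ p ^ n = 1) : g ∈ lowerRamificationGroup k 1 := by
  have hu : coeff 1 (g X) = 1 := by
    have := congrArg linearCoeffHom hg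
    rwa [map_pow, map_one, ← mul_one (p ^ n), ExpChar.pow_prime_pow_mul_eq_one_iff, pow_one]
      at this
  have hX : X ^ 2 ∣ g X - X := by
    rw [X_pow_dvd_iff]
    intro d hd
    interval_cases d
    · simp [coeff_zero_eq_constantCoeff_apply, constantCoeff_algEquiv]
    · simp [hu]
  exact X_pow_dvd_algEquiv_sub hX

theorem lowerRamificationGroup_one_subgroupOf_eq_top {p : ℕ} [ExpChar k p]
    {G : Subgroup (k⟦X⟧ ≃ₐ[k] k⟦X⟧)} (hG : IsPGroup p G) :
    (lowerRamificationGroup k 1).subgroupOf G = ⊤ := by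
  rw [Subgroup.subgroupOf_eq_top]
  intro g hg
  obtain ⟨n, hn⟩ := hG ⟨g, hg⟩
  exact mem_lowerRamificationGroup_one_of_pow_eq_one (congrArg Subtype.val hn)

end PowerSeries

theorem hkg_z4_curve_genus_one_iff_ramification_filtration_general
    (k : Type*) [Field k] [CharP k 2]
    (G : Subgroup (PowerSeries k ≃ₐ[k] PowerSeries k))
    (hcard : Nat.card G = 4)
    (Ri : ℕ → Set G)
    (hRi : ∀ i, Ri i = {g : G | ∀ f : PowerSeries k,
        (g : PowerSeries k ≃ₐ[k] PowerSeries k) f - f ∈ Ideal.span {X ^ (i + 1)}})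
    (N : ℕ) (hN : ∀ i ≥ N, ∀ g ∈ Ri i, g = 1)
    (gX : ℕ)
    (hHurwitz : 2 * (gX : ℤ) - 2 =
        4 * (-2) + ∑ i ∈ Finset.range N, ((Nat.card (Ri i) : ℤ) - 1)) :
    gX = 1 ↔
      (Nat.card (Ri 0) = 4 ∧ Nat.card (Ri 1) = 4 ∧
        Nat.card (Ri 2) = 2 ∧ Nat.card (Ri 3) = 2 ∧
        ∀ i ≥ 4, ∀ g ∈ Ri i, g = 1) := by
  obtain rfl : Ri = fun i => ((lowerRamificationGroup k i).subgroupOf G : Set G) := by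
    ext i g
    simp [hRi, Subgroup.mem_subgroupOf, mem_lowerRamificationGroup, Ideal.mem_span_singleton]
  have : Finite G := Nat.finite_of_card_ne_zero (by rw [hcard]; norm_num)
  set c : ℕ → ℕ := fun i => Nat.card ((lowerRamificationGroup k i).subgroupOf G)
  have htrivial : ∀ i, c i = 1 ↔ ∀ g ∈ (lowerRamificationGroup k i).subgroupOf G, g = 1 :=
    fun i => Subgroup.card_eq_one.trans (Subgroup.eq_bot_iff_forall _)
  have hanti : Antitone c := fun i j hij =>
    Subgroup.card_le_of_le (Subgroup.subgroupOf_mono G (lowerRamificationGroup_antitone hij))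
  have hc1 : c 1 = 4 := by
    simp only [c, lowerRamificationGroup_one_subgroupOf_eq_top (IsPGroup.of_card (p := 2)
      (n := 2) hcard), Subgroup.card_top, hcard]
  have hc0 : c 0 = 4 :=
    le_antisymm (hcard ▸ Subgroup.card_le_card_group _) (hc1 ▸ hanti zero_le_one)
  have hfiltration := sum_range_sub_one_eq_eight_iff (N := N) hanti
    (fun i => hcard ▸ Subgroup.card_subgroup_dvd_card _) hc0 hc1
    (fun i hi => (htrivial i).2 (hN i hi))
  simp only [htrivial] at hfiltration
  simp only [SetLike.coe_sort_coe, SetLike.mem_coe] at hHurwitz ⊢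
  change 2 * (gX : ℤ) - 2 = 4 * (-2) + ∑ i ∈ Finset.range N, ((c i : ℤ) - 1) at hHurwitz
  change gX = 1 ↔ c 0 = 4 ∧ c 1 = 4 ∧ _
  rw [hc0, hc1, ← hfiltration]
  omega

/-- Let `k` be an algebraically closed field of characteristic 2 and let
`G ≅ ℤ/4ℤ` act faithfully on a curve `X` over `k` fixing a point `x`, with `X/G` of
genus 0 and the action on `X \ {x}` unramified (an HKG `ℤ/4ℤ`-curve).  Identifying
`G` with a subgroup of `Aut(k[[t]])` via its action on the completed local ring at
`x`, with lower ramification groups `G_i`, the Hurwitz formula (which encodes the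
HKG hypotheses) reads `2 g_X - 2 = 4·(-2) + Σ_{i ≥ 0} (|G_i| - 1)`.  Then `X` has
genus 1 if and only if `|G_0| = |G_1| = 4`, `|G_2| = |G_3| = 2`, and `G_i = 1` for
`i ≥ 4`. -/
theorem hkg_z4_curve_genus_one_iff_ramification_filtration
    (k : Type*) [Field k] [IsAlgClosed k] [CharP k 2]
    (G : Subgroup (PowerSeries k ≃ₐ[k] PowerSeries k))
    (hcard : Nat.card G = 4) (hcyc : IsCyclic G)
    (Ri : ℕ → Set G)
    (hRi : ∀ i, Ri i = {g : G | ∀ f : PowerSeries k,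
        (g : PowerSeries k ≃ₐ[k] PowerSeries k) f - f ∈ Ideal.span {X ^ (i + 1)}})
    (N : ℕ) (hN : ∀ i ≥ N, ∀ g ∈ Ri i, g = 1)
    (gX : ℕ)
    (hHurwitz : 2 * (gX : ℤ) - 2 =
        4 * (-2) + ∑ i ∈ Finset.range N, ((Nat.card (Ri i) : ℤ) - 1)) :
    gX = 1 ↔
      (Nat.card (Ri 0) = 4 ∧ Nat.card (Ri 1) = 4 ∧
        Nat.card (Ri 2) = 2 ∧ Nat.card (Ri 3) = 2 ∧
        ∀ i ≥ 4, ∀ g ∈ Ri i, g = 1) :=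
  hkg_z4_curve_genus_one_iff_ramification_filtration_general k G hcard Ri hRi N hN gX hHurwitz
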